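/- Let α₁ ∈ ℝ, let u, p : ℝ → ℂ be differentiable, and let Ω : ℝ → ℝ be differentiable with Ω(t) ≠ 0 and Ω(t)² = α₁² − |u(t)|² for all t, and suppose the boundary condition i·u'(t) + 2·|u(t)|²·u(t) − 2·p(t)·Ω(t) = 0 holds for all t. Define 𝓛(t;λ) = !![λ + iΩ(t), i·u(t); i·conj(u(t)), λ − iΩ(t)]. Then ∂ₜ𝓛(t;λ) = V(t;−λ)·𝓛(t;λ) − 𝓛(t;λ)·V(t;λ) for all λ ∈ ℂ and all t ∈ ℝ. -/

import Mathlib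

open Matrix

noncomputable section

/-- The Pauli matrix σ₃. -/
def σ3 : Matrix (Fin 2) (Fin 2) ℂ := !![1, 0; 0, -1]

/-- The boundary potential matrix `Q(t)` built from `u(t) = q(0,t)`. -/
def Qb (u : ℝ → ℂ) (t : ℝ) : Matrix (Fin 2) (Fin 2) ℂ :=
  !![0, u t; -(starRingEnd ℂ) (u t), 0]

/-- The boundary matrix `P(t)` built from `p(t) = ∂ₓq(0,t)`. -/
def Pb (p : ℝ → ℂ) (t : ℝ) : Matrix (Fin 2) (Fin 2) ℂ :=
  !![0, p t; -(starRingEnd ℂ) (p t), 0]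

/-- The NLS time-Lax matrix `V(t;λ)` evaluated at the boundary. -/
def Vt (u p : ℝ → ℂ) (t : ℝ) (lam : ℂ) : Matrix (Fin 2) (Fin 2) ℂ :=
  (-2 * Complex.I * lam ^ 2) • σ3 + (2 * lam) • Qb u t
    - Complex.I • (Pb p t * σ3) - Complex.I • (Qb u t ^ 2 * σ3)

/-- The numerator matrix of the Case 2 (defect-type) reflection matrix. -/
def L2 (u : ℝ → ℂ) (Ω : ℝ → ℝ) (t : ℝ) (lam : ℂ) : Matrix (Fin 2) (Fin 2) ℂ :=
  !![lam + Complex.I * Ω t, Complex.I * u t;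
     Complex.I * starRingEnd ℂ (u t), lam - Complex.I * Ω t]

lemma Vt_eq (u p : ℝ → ℂ) (t : ℝ) (lam : ℂ) :
    Vt u p t lam =
      !![-2 * Complex.I * lam ^ 2 + Complex.I * (u t * starRingEnd ℂ (u t)),
          2 * lam * u t + Complex.I * p t;
         -2 * lam * starRingEnd ℂ (u t) + Complex.I * starRingEnd ℂ (p t),
          2 * Complex.I * lam ^ 2 - Complex.I * (u t * starRingEnd ℂ (u t))] := by
  ext i j
  fin_cases i <;> fin_cases j <;>
    simp [Vt, Qb, Pb, σ3, pow_two, Matrix.mul_apply, Fin.sum_univ_two] <;> ring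

/-- Case 2 (defect-type boundary conditions): under `Ω² = α₁² − |u|²` and the boundary
condition `i u' + 2|u|²u − 2pΩ = 0`, the matrix `𝓛(t;λ)` satisfies the Sklyanin
constraint `∂ₜ𝓛 = V(t;−λ)𝓛 − 𝓛V(t;λ)`. -/
theorem defect_type_boundary (α₁ : ℝ) (u p : ℝ → ℂ) (Ω : ℝ → ℝ)
    (hu : Differentiable ℝ u) (hp : Differentiable ℝ p) (hΩ : Differentiable ℝ Ω)
    (hΩne : ∀ t : ℝ, Ω t ≠ 0)
    (hΩsq : ∀ t : ℝ, Ω t ^ 2 = α₁ ^ 2 - ‖u t‖ ^ 2)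
    (hbc : ∀ t : ℝ, Complex.I * deriv u t + 2 * (‖u t‖ : ℂ) ^ 2 * u t
      - 2 * p t * (Ω t : ℂ) = 0) :
    ∀ (lam : ℂ) (t : ℝ),
      (Matrix.of fun i j => deriv (fun s => L2 u Ω s lam i j) t)
        = Vt u p t (-lam) * L2 u Ω t lam - L2 u Ω t lam * Vt u p t lam := by
  intro lam t
  have hI : Complex.I * Complex.I = -1 := Complex.I_mul_I
  have habs : ∀ s : ℝ, ((‖u s‖ : ℂ)) ^ 2 = u s * starRingEnd ℂ (u s) := by
    intro s
    rw [Complex.mul_conj]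
    norm_cast
    exact Complex.sq_norm (u s)
  -- derivative of u
  have hu' : deriv u t = 2 * Complex.I * (u t * starRingEnd ℂ (u t)) * u t
      - 2 * Complex.I * p t * (Ω t : ℂ) := by
    have h := hbc t
    rw [habs t] at h
    linear_combination (-Complex.I) * h + (deriv u t) * hI
  -- derivative of conj u
  have hcu : HasDerivAt (fun s => starRingEnd ℂ (u s)) (starRingEnd ℂ (deriv u t)) t :=
    (hu t).hasDerivAt.star
  have hcu' : starRingEnd ℂ (deriv u t)
      = -2 * Complex.I * (u t * starRingEnd ℂ (u t)) * starRingEnd ℂ (u t)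
        + 2 * Complex.I * starRingEnd ℂ (p t) * (Ω t : ℂ) := by
    rw [hu']
    simp only [map_sub, _root_.map_mul, map_ofNat, Complex.conj_I, Complex.conj_ofReal,
      Complex.conj_conj]
    ring
  -- derivative of Ω (as complex)
  have hΩC : HasDerivAt (fun s => ((Ω s : ℝ) : ℂ)) ((deriv Ω t : ℝ) : ℂ) t :=
    (hΩ t).hasDerivAt.ofReal_comp
  have hΩ' : ((deriv Ω t : ℝ) : ℂ)
      = Complex.I * (p t * starRingEnd ℂ (u t) - u t * starRingEnd ℂ (p t)) := by
    have hF : HasDerivAt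
        (fun s => ((Ω s : ℝ) : ℂ) ^ 2 + u s * starRingEnd ℂ (u s))
        (2 * (Ω t : ℂ) * ((deriv Ω t : ℝ) : ℂ)
          + (deriv u t * starRingEnd ℂ (u t) + u t * starRingEnd ℂ (deriv u t))) t := by
      have h1 : HasDerivAt (fun s => ((Ω s : ℝ) : ℂ) ^ 2) (2 * (Ω t : ℂ) * ((deriv Ω t : ℝ) : ℂ)) t := by
        have h : HasDerivAt (fun s => ((Ω s : ℝ) : ℂ) * ((Ω s : ℝ) : ℂ)) _ t := hΩC.mul hΩC
        have e : (fun s => ((Ω s : ℝ) : ℂ) * ((Ω s : ℝ) : ℂ)) = fun s => ((Ω s : ℝ) : ℂ) ^ 2 := by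
          funext s; ring
        rw [e] at h
        convert h using 1
        ring
      exact h1.add (((hu t).hasDerivAt).mul hcu)
    have hconst : (fun s => ((Ω s : ℝ) : ℂ) ^ 2 + u s * starRingEnd ℂ (u s))
        = fun _ => ((α₁ : ℂ)) ^ 2 := by
      funext s
      have h := hΩsq s
      rw [← habs s]
      norm_cast
      push_cast
      linarith
    have h0 : (2 * (Ω t : ℂ) * ((deriv Ω t : ℝ) : ℂ)
        + (deriv u t * starRingEnd ℂ (u t) + u t * starRingEnd ℂ (deriv u t))) = 0 := by
      have := hF.deriv
      rw [hconst] at hF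
      simpa using hF.unique (hasDerivAt_const t _)
    have hΩt : ((Ω t : ℝ) : ℂ) ≠ 0 := by
      exact_mod_cast Complex.ofReal_ne_zero.mpr (hΩne t)
    have hcan : (2 * (Ω t : ℂ)) * ((deriv Ω t : ℝ) : ℂ)
        = (2 * (Ω t : ℂ)) * (Complex.I * (p t * starRingEnd ℂ (u t) - u t * starRingEnd ℂ (p t))) := by
      rw [hcu', hu'] at h0
      linear_combination h0
    exact mul_left_cancel₀ (by simpa using hΩt) hcan
  -- entrywise derivatives of L2
  have d00 : deriv (fun s => L2 u Ω s lam 0 0) t = Complex.I * ((deriv Ω t : ℝ) : ℂ) := by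
    simp only [L2, Matrix.cons_val', Matrix.cons_val_zero, Matrix.empty_val',
      Matrix.cons_val_fin_one, Matrix.of_apply]
    exact ((hΩC.const_mul Complex.I).const_add lam).deriv
  have d01 : deriv (fun s => L2 u Ω s lam 0 1) t = Complex.I * deriv u t := by
    simp only [L2, Matrix.cons_val', Matrix.cons_val_zero, Matrix.cons_val_one,
      Matrix.head_cons, Matrix.empty_val', Matrix.cons_val_fin_one, Matrix.of_apply]
    exact ((hu t).hasDerivAt.const_mul Complex.I).deriv
  have d10 : deriv (fun s => L2 u Ω s lam 1 0) t = Complex.I * starRingEnd ℂ (deriv u t) := by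
    simp only [L2, Matrix.cons_val', Matrix.cons_val_zero, Matrix.cons_val_one,
      Matrix.head_cons, Matrix.head_fin_const, Matrix.empty_val', Matrix.cons_val_fin_one,
      Matrix.of_apply]
    exact (hcu.const_mul Complex.I).deriv
  have d11 : deriv (fun s => L2 u Ω s lam 1 1) t = -(Complex.I * ((deriv Ω t : ℝ) : ℂ)) := by
    simp only [L2, Matrix.cons_val', Matrix.cons_val_zero, Matrix.cons_val_one,
      Matrix.head_cons, Matrix.head_fin_const, Matrix.empty_val', Matrix.cons_val_fin_one,
      Matrix.of_apply]
    have : HasDerivAt (fun s => lam - Complex.I * ((Ω s : ℝ) : ℂ))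
        (-(Complex.I * ((deriv Ω t : ℝ) : ℂ))) t := (hΩC.const_mul Complex.I).const_sub lam
    exact this.deriv
  have hL : (Matrix.of fun i j => deriv (fun s => L2 u Ω s lam i j) t)
      = !![u t * starRingEnd ℂ (p t) - p t * starRingEnd ℂ (u t),
           -2 * (u t * starRingEnd ℂ (u t)) * u t + 2 * p t * (Ω t : ℂ);
           2 * (u t * starRingEnd ℂ (u t)) * starRingEnd ℂ (u t)
             - 2 * starRingEnd ℂ (p t) * (Ω t : ℂ),
           -(u t * starRingEnd ℂ (p t) - p t * starRingEnd ℂ (u t))] := by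
    ext i j
    fin_cases i <;> fin_cases j <;>
      simp only [Fin.mk_zero, Fin.mk_one, Matrix.of_apply, Matrix.cons_val',
        Matrix.cons_val_zero, Matrix.cons_val_one,
        Matrix.head_cons, Matrix.head_fin_const, Matrix.empty_val', Matrix.cons_val_fin_one,
        Fin.isValue]
    · rw [d00, hΩ']
      linear_combination (p t * starRingEnd ℂ (u t) - u t * starRingEnd ℂ (p t)) * hI
    · rw [d01, hu']
      linear_combination (2 * (u t * starRingEnd ℂ (u t)) * u t - 2 * p t * (Ω t : ℂ)) * hI
    · rw [d10, hcu']
      linear_combination (-2 * (u t * starRingEnd ℂ (u t)) * starRingEnd ℂ (u t)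
        + 2 * starRingEnd ℂ (p t) * (Ω t : ℂ)) * hI
    · rw [d11, hΩ']
      linear_combination (u t * starRingEnd ℂ (p t) - p t * starRingEnd ℂ (u t)) * hI
  rw [hL, Vt_eq, Vt_eq]
  ext i j
  fin_cases i <;> fin_cases j <;>
    simp only [Fin.mk_zero, Fin.mk_one, Matrix.sub_apply, Matrix.mul_apply, Fin.sum_univ_two, L2,
      Matrix.cons_val', Matrix.cons_val_zero, Matrix.cons_val_one, Matrix.head_cons,
      Matrix.head_fin_const, Matrix.empty_val', Matrix.cons_val_fin_one, Fin.isValue,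
      Matrix.of_apply]
  · linear_combination (-(starRingEnd ℂ (u t)) * p t + u t * starRingEnd ℂ (p t)) * hI
  · linear_combination (2 * p t * (Ω t : ℂ) - 2 * u t * u t * starRingEnd ℂ (u t)
      + 4 * lam * lam * u t) * hI
  · linear_combination (-2 * starRingEnd ℂ (p t) * (Ω t : ℂ)
      + 2 * u t * starRingEnd ℂ (u t) * starRingEnd ℂ (u t)
      - 4 * lam * lam * starRingEnd ℂ (u t)) * hI
  · linear_combination (starRingEnd ℂ (u t) * p t - u t * starRingEnd ℂ (p t)) * hI

end
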